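/- For every θ > 0 and all reals λ₁, λ₂, the reduced stress–strength integral satisfies θ · ∫₀¹ (1−y)^{2θ−1} (1 + λ₁ − 2λ₁(1−y)^θ) (1 + λ₂ − λ₂(1−y)^θ) dy = (λ₂ − λ₁ + 3)/6. -/

import Mathlib

open Real MeasureTheory

/-
Expanding the product and using `(1 - y)^(kθ - 1) · (1 - y)^θ = (1 - y)^((k+1)θ - 1)`, the integrand
is a combination of `(1 - y)^(2θ-1)`, `(1 - y)^(3θ-1)` and `(1 - y)^(4θ-1)`, whose integrals over
`(0, 1)` are `1/(2θ)`, `1/(3θ)` and `1/(4θ)`; after multiplying by `θ` every `θ` cancels.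
-/

lemma intervalIntegrable_one_sub_rpow {r : ℝ} (hr : -1 < r) :
    IntervalIntegrable (fun y : ℝ => (1 - y) ^ r) volume 0 1 := by
  simpa using ((intervalIntegral.intervalIntegrable_rpow' (a := 0) (b := 1) hr).comp_sub_left 1).symm

lemma integral_one_sub_rpow {r : ℝ} (hr : -1 < r) :
    ∫ y in (0 : ℝ)..1, (1 - y) ^ r = 1 / (r + 1) := by
  rw [intervalIntegral.integral_comp_sub_left (fun u : ℝ => u ^ r), sub_self, sub_zero,
    integral_rpow (Or.inl hr), one_rpow, zero_rpow (by linarith), sub_zero]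

lemma stress_strength_integrand_eq {u : ℝ} (hu : 0 < u) (θ a b : ℝ) :
    u ^ (2 * θ - 1) * (1 + a - 2 * a * u ^ θ) * (1 + b - b * u ^ θ) =
      (1 + a) * (1 + b) * u ^ (2 * θ - 1) - ((1 + a) * b + 2 * a * (1 + b)) * u ^ (3 * θ - 1)
        + 2 * a * b * u ^ (4 * θ - 1) := by
  have h3 : u ^ (3 * θ - 1) = u ^ (2 * θ - 1) * u ^ θ := by
    rw [← rpow_add hu]; ring_nf
  have h4 : u ^ (4 * θ - 1) = u ^ (2 * θ - 1) * u ^ θ * u ^ θ := by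
    rw [← rpow_add hu, ← rpow_add hu]; ring_nf
  rw [h3, h4]; ring

theorem stress_strength_integral (θ lam1 lam2 : ℝ) (hθ : 0 < θ) :
    θ * ∫ y in Set.Ioo (0 : ℝ) 1,
        (1 - y) ^ (2 * θ - 1) * (1 + lam1 - 2 * lam1 * (1 - y) ^ θ) *
          (1 + lam2 - lam2 * (1 - y) ^ θ) =
      (lam2 - lam1 + 3) / 6 := by
  set A := (1 + lam1) * (1 + lam2)
  set B := (1 + lam1) * lam2 + 2 * lam1 * (1 + lam2)
  set C := 2 * lam1 * lam2
  have i2 := intervalIntegrable_one_sub_rpow (r := 2 * θ - 1) (by linarith)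
  have i3 := intervalIntegrable_one_sub_rpow (r := 3 * θ - 1) (by linarith)
  have i4 := intervalIntegrable_one_sub_rpow (r := 4 * θ - 1) (by linarith)
  have expand : ∫ y in Set.Ioo (0 : ℝ) 1,
      (1 - y) ^ (2 * θ - 1) * (1 + lam1 - 2 * lam1 * (1 - y) ^ θ) *
        (1 + lam2 - lam2 * (1 - y) ^ θ) =
      ∫ y in (0 : ℝ)..1, (A * (1 - y) ^ (2 * θ - 1) - B * (1 - y) ^ (3 * θ - 1)
        + C * (1 - y) ^ (4 * θ - 1)) := by
    rw [intervalIntegral.integral_of_le zero_le_one, integral_Ioc_eq_integral_Ioo]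
    refine setIntegral_congr_fun measurableSet_Ioo fun y hy => ?_
    exact stress_strength_integrand_eq (sub_pos.2 hy.2) θ lam1 lam2
  rw [expand, intervalIntegral.integral_add ((i2.const_mul A).sub (i3.const_mul B))
      (i4.const_mul C), intervalIntegral.integral_sub (i2.const_mul A) (i3.const_mul B),
    intervalIntegral.integral_const_mul, intervalIntegral.integral_const_mul,
    intervalIntegral.integral_const_mul, integral_one_sub_rpow (by linarith),
    integral_one_sub_rpow (by linarith), integral_one_sub_rpow (by linarith)]
  simp only [A, B, C]
  field_simp
  ring
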